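/- Let E be a simple regular expression over an alphabet α. The nondeterministic automaton whose state type is RegularExpression α, whose transition function sends a state q and a symbol a to the set ∂ₐ(q) of Antimirov partial derivatives of q with respect to a, whose set of start states is {E}, and whose accepting states are the expressions q with ε ∈ L(q), accepts exactly the language L(E). (This is the correctness of Antimirov's derived-term NFA, i.e., of the (D_A, B_A)-alternating automaton construction.) -/

import Mathlib

open scoped Classical

/-- The Antimirov partial derivative of a regular expression with respect to a symbol. -/
noncomputable def aderiv {α : Type*} (a : α) : RegularExpression α → Set (RegularExpression α)
  | .zero => ∅
  | .epsilon => ∅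
  | .char b => if b = a then {1} else ∅
  | .plus E₁ E₂ => aderiv a E₁ ∪ aderiv a E₂
  | .comp E₁ E₂ =>
      if [] ∈ E₁.matches' then ((· * E₂) '' aderiv a E₁) ∪ aderiv a E₂
      else (· * E₂) '' aderiv a E₁
  | .star E₁ => (· * E₁.star) '' aderiv a E₁

/-- Iterated Antimirov partial derivative with respect to a word. -/
noncomputable def aderivWord {α : Type*} : List α → RegularExpression α → Set (RegularExpression α)
  | [], E => {E}
  | a :: w, E => ⋃ F ∈ aderiv a E, aderivWord w F

/-- Left quotient of a language by a word. -/
def lquot {α : Type*} (w : List α) (L : Language α) : Language α := {v | w ++ v ∈ L}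

/-!
Antimirov's theorem: the left quotient a⁻¹L(E) is the union of the languages L(F), F ∈ ∂ₐ(E).
By structural induction it reduces to the quotient rules a⁻¹(LM) = (a⁻¹L)M ∪ [ε ∈ L] a⁻¹M and
a⁻¹(L∗) = (a⁻¹L)L∗. Iterating letter by letter, w⁻¹L(E) is the union of L(F) over the word
derivatives F ∈ ∂_w(E), which are exactly the states the automaton reaches from E on w. Hence w is
accepted iff ε ∈ w⁻¹L(E), i.e. iff w ∈ L(E).
-/

open Computability

section LeftQuotient

variable {α : Type*}

theorem mem_lquot {w v : List α} {l : Language α} : v ∈ lquot w l ↔ w ++ v ∈ l := Iff.rfl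

theorem lquot_singleton_mul (a : α) (l m : Language α) :
    lquot [a] (l * m) = lquot [a] l * m + if [] ∈ l then lquot [a] m else 0 := by
  ext w
  have mem_ite : w ∈ (if [] ∈ l then lquot [a] m else 0) ↔ [] ∈ l ∧ w ∈ lquot [a] m := by
    split_ifs <;> simp [*, Language.notMem_zero]
  rw [Language.mem_add, mem_ite]
  constructor
  · intro h
    obtain ⟨_ | ⟨b, u⟩, hu, v, hv, huv⟩ := Language.mem_mul.1 h
    · exact .inr ⟨hu, by simpa [mem_lquot, ← huv] using hv⟩
    · obtain ⟨rfl, rfl⟩ : b = a ∧ u ++ v = w := by simpa using huv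
      exact .inl (Language.append_mem_mul hu hv)
  · rintro (h | ⟨hl, hm⟩)
    · obtain ⟨u, hu, v, hv, rfl⟩ := Language.mem_mul.1 h
      rw [mem_lquot, ← List.append_assoc]
      exact Language.append_mem_mul hu hv
    · exact Language.append_mem_mul (a := []) hl hm

theorem lquot_singleton_kstar (a : α) (l : Language α) : lquot [a] l∗ = lquot [a] l * l∗ := by
  ext w
  constructor
  · intro h
    obtain ⟨_ | ⟨u, S⟩, hw, hS⟩ := Language.mem_kstar_iff_exists_nonempty.1 h
    · simp at hw
    obtain ⟨hu, hu₀⟩ := hS u List.mem_cons_self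
    obtain ⟨b, u, rfl⟩ := List.exists_cons_of_ne_nil hu₀
    obtain ⟨rfl, rfl⟩ : b = a ∧ w = u ++ S.flatten := by simpa [eq_comm] using hw
    exact Language.append_mem_mul hu
      (Language.join_mem_kstar fun y hy => (hS y (List.mem_cons_of_mem _ hy)).1)
  · intro h
    obtain ⟨u, hu, v, hv, rfl⟩ := Language.mem_mul.1 h
    rw [mem_lquot, ← List.append_assoc]
    exact mul_kstar_le_kstar (a := l) (Language.append_mem_mul hu hv)

end LeftQuotient

namespace RegularExpression

variable {α : Type*}

def setMatches (S : Set (RegularExpression α)) : Language α := {w | ∃ F ∈ S, w ∈ F.matches'}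

theorem mem_setMatches {S : Set (RegularExpression α)} {w : List α} :
    w ∈ setMatches S ↔ ∃ F ∈ S, w ∈ F.matches' := Iff.rfl

theorem setMatches_singleton (E : RegularExpression α) : setMatches {E} = E.matches' := by
  ext w; simp [mem_setMatches]

theorem setMatches_union (S T : Set (RegularExpression α)) :
    setMatches (S ∪ T) = setMatches S + setMatches T := by
  ext w
  rw [Language.mem_add]
  simp only [mem_setMatches, Set.mem_union, or_and_right, exists_or]

theorem setMatches_image_mul (S : Set (RegularExpression α)) (E : RegularExpression α) :
    setMatches ((· * E) '' S) = setMatches S * E.matches' := by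
  ext w
  simp only [mem_setMatches, Set.mem_image, exists_exists_and_eq_and, matches'_mul,
    Language.mem_mul]
  constructor
  · rintro ⟨F, hF, u, hu, v, hv, rfl⟩
    exact ⟨u, ⟨F, hF, hu⟩, v, hv, rfl⟩
  · rintro ⟨u, ⟨F, hF, hu⟩, v, hv, rfl⟩
    exact ⟨F, hF, u, hu, v, hv, rfl⟩

theorem lquot_singleton_matches' (a : α) (E : RegularExpression α) :
    lquot [a] E.matches' = setMatches (aderiv a E) := by
  induction E with
  | zero => ext w; simp [aderiv, mem_lquot, mem_setMatches, Language.notMem_zero]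
  | epsilon => ext w; simp [aderiv, mem_lquot, mem_setMatches, Language.mem_one]
  | char b =>
    ext w
    change [a] ++ w = [b] ↔ _
    by_cases hb : b = a <;> simp [aderiv, hb, @eq_comm _ a b, mem_setMatches, Language.mem_one]
  | plus E₁ E₂ ih₁ ih₂ =>
    rw [aderiv, plus_def, matches'_add, setMatches_union, ← ih₁, ← ih₂]
    rfl
  | comp E₁ E₂ ih₁ ih₂ =>
    rw [aderiv, comp_def, matches'_mul, lquot_singleton_mul, ih₁, ih₂]
    split_ifs <;> simp only [setMatches_union, setMatches_image_mul, add_zero]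
  | star E ih =>
    rw [matches'_star, lquot_singleton_kstar, ih, aderiv, setMatches_image_mul, matches'_star]

theorem lquot_matches' (w : List α) (E : RegularExpression α) :
    lquot w E.matches' = setMatches (aderivWord w E) := by
  induction w generalizing E with
  | nil => rw [aderivWord, setMatches_singleton]; rfl
  | cons a w ih =>
    ext v
    have head : a :: (w ++ v) ∈ E.matches' ↔ w ++ v ∈ setMatches (aderiv a E) := by
      rw [← lquot_singleton_matches']; rfl
    have tail (F : RegularExpression α) : w ++ v ∈ F.matches' ↔ v ∈ setMatches (aderivWord w F) :=
      Set.ext_iff.1 (ih F) v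
    rw [mem_lquot, List.cons_append, head, aderivWord]
    simp only [mem_setMatches, tail, Set.mem_iUnion₂]
    exact ⟨fun ⟨F, hF, G, hG, hv⟩ => ⟨G, ⟨F, hF, hG⟩, hv⟩,
      fun ⟨G, ⟨F, hF, hG⟩, hv⟩ => ⟨F, hF, G, hG, hv⟩⟩

end RegularExpression

open RegularExpression

section AntimirovNFA

variable {α : Type*}

noncomputable def antimirovNFA (E : RegularExpression α) : NFA α (RegularExpression α) where
  step q a := aderiv a q
  start := {E}
  accept := {q | [] ∈ q.matches'}

theorem evalFrom_antimirovNFA (E F : RegularExpression α) (w : List α) :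
    (antimirovNFA E).evalFrom {F} w = aderivWord w F := by
  induction w generalizing F with
  | nil => rfl
  | cons a w ih =>
    rw [NFA.evalFrom_cons, NFA.stepSet_singleton, NFA.evalFrom_eq_biUnion_singleton, aderivWord]
    simp only [ih]
    rfl

end AntimirovNFA

theorem antimirov_nfa_correct {α : Type*} (E : RegularExpression α) :
    (NFA.mk (fun q a => aderiv a q) {E} {q : RegularExpression α | [] ∈ q.matches'}).accepts =
      E.matches' := by
  change (antimirovNFA E).accepts = E.matches'
  ext w
  calc w ∈ (antimirovNFA E).accepts ↔ ∃ F ∈ aderivWord w E, [] ∈ F.matches' := by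
        rw [NFA.mem_accepts, show (antimirovNFA E).start = {E} from rfl, evalFrom_antimirovNFA]
        exact exists_congr fun _ => and_comm
    _ ↔ [] ∈ lquot w E.matches' := by rw [lquot_matches', mem_setMatches]
    _ ↔ w ∈ E.matches' := by rw [mem_lquot, List.append_nil]
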